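/- arXiv:1005.0451 — 2 statements merged into one kernel-verified Lean document; each statement's English description precedes it below -/
import Mathlib

section
/- Let f : I ⊆ ℝ → ℝ be twice differentiable on the interior I° of I, with a, b ∈ I°, a < b, and f'' Lebesgue integrable on [a,b]. Let q ≥ 1. If |f''|^q is convex on [a,b], then |(1/(b-a)) ∫_a^b f(x) dx − f((a+b)/2)| ≤ ((b-a)²/24) · [(|f''(a)|^q + |f''(b)|^q)/2]^{1/q}. -/
/-!
Let `K x = min ((x - a)², (b - x)²) / 2`, the Peano kernel of the midpoint rule: integrating by
parts twice on each half of `[a, b]` gives `∫ f - (b - a) f ((a + b) / 2) = ∫ K f''`. Hölder's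
inequality with exponents `1 - 1/q` and `1/q` against the weight `K` gives
`∫ K |f''| ≤ (∫ K) ^ (1 - 1/q) (∫ K |f''| ^ q) ^ (1/q)`. Convexity bounds `|f''| ^ q` by its
secant through the endpoints, and since `K` is symmetric about the midpoint, `K` integrates that
secant to `(∫ K) (|f'' a| ^ q + |f'' b| ^ q) / 2`. Finally `∫ K = (b - a)³ / 24`.
-/

open MeasureTheory Set

theorem integral_rpow_mul_rpow_le_of_add_eq_one {α : Type*} [MeasurableSpace α]
    {μ : Measure α} {f g : α → ℝ} (hf0 : 0 ≤ᵐ[μ] f) (hg0 : 0 ≤ᵐ[μ] g)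
    (hf : Integrable f μ) (hg : Integrable g μ) {p q : ℝ} (hp : 0 ≤ p) (hq : 0 ≤ q)
    (hpq : p + q = 1) :
    ∫ x, f x ^ p * g x ^ q ∂μ ≤ (∫ x, f x ∂μ) ^ p * (∫ x, g x ∂μ) ^ q := by
  have hfg0 : 0 ≤ᵐ[μ] fun x => f x ^ p * g x ^ q := by
    filter_upwards [hf0, hg0] with x hfx hgx using
      mul_nonneg (Real.rpow_nonneg hfx p) (Real.rpow_nonneg hgx q)
  have hfg : AEStronglyMeasurable (fun x => f x ^ p * g x ^ q) μ :=
    ((hf.aemeasurable.pow_const p).mul (hg.aemeasurable.pow_const q)).aestronglyMeasurable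
  have hofReal : ∀ᵐ x ∂μ, ENNReal.ofReal (f x ^ p * g x ^ q) =
      ENNReal.ofReal (f x) ^ p * ENNReal.ofReal (g x) ^ q := by
    filter_upwards [hf0, hg0] with x hfx hgx
    rw [ENNReal.ofReal_mul (Real.rpow_nonneg hfx p), ENNReal.ofReal_rpow_of_nonneg hfx hp,
      ENNReal.ofReal_rpow_of_nonneg hgx hq]
  have hf_fin := (hasFiniteIntegral_iff_ofReal hf0).1 hf.2
  have hg_fin := (hasFiniteIntegral_iff_ofReal hg0).1 hg.2
  rw [integral_eq_lintegral_of_nonneg_ae hfg0 hfg, integral_eq_lintegral_of_nonneg_ae hf0 hf.1,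
    integral_eq_lintegral_of_nonneg_ae hg0 hg.1, ENNReal.toReal_rpow, ENNReal.toReal_rpow,
    ← ENNReal.toReal_mul, lintegral_congr_ae hofReal]
  refine ENNReal.toReal_mono (by finiteness) ?_
  exact ENNReal.lintegral_mul_norm_pow_le hf.aemeasurable.ennreal_ofReal
    hg.aemeasurable.ennreal_ofReal hp hq hpq

theorem ConvexOn.sub_mul_le_secant {φ : ℝ → ℝ} {a b x : ℝ}
    (hφ : ConvexOn ℝ (Icc a b) φ) (hx : x ∈ Icc a b) :
    (b - a) * φ x ≤ (b - x) * φ a + (x - a) * φ b := by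
  rcases hx.1.eq_or_lt with rfl | hax
  · simp
  rcases hx.2.eq_or_lt with rfl | hxb
  · simp
  have hab := hax.le.trans hx.2
  exact hφ.secant_mono_aux1 (left_mem_Icc.2 hab) (right_mem_Icc.2 hab) hax hxb

theorem integral_sq_sub_mul_second_deriv {f f' f'' : ℝ → ℝ} {c d : ℝ}
    (hf : ∀ x ∈ uIcc c d, HasDerivAt f (f' x) x)
    (hf' : ∀ x ∈ uIcc c d, HasDerivAt f' (f'' x) x) (hf'' : IntervalIntegrable f'' volume c d) :
    ∫ x in c..d, (x - c) ^ 2 / 2 * f'' x =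
      (d - c) ^ 2 / 2 * f' d - (d - c) * f d + ∫ x in c..d, f x := by
  have hsq : ∀ x ∈ uIcc c d, HasDerivAt (fun y => (y - c) ^ 2 / 2) (x - c) x := fun x _ => by
    simpa using ((hasDerivAt_id x).sub_const c).pow 2 |>.div_const 2
  have hlin : ∀ x ∈ uIcc c d, HasDerivAt (fun y => y - c) 1 x := fun x _ =>
    (hasDerivAt_id x).sub_const c
  have hf'_int : IntervalIntegrable f' volume c d :=
    ContinuousOn.intervalIntegrable fun x hx => (hf' x hx).continuousAt.continuousWithinAt
  rw [intervalIntegral.integral_mul_deriv_eq_deriv_mul hsq hf'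
      ((continuous_sub_right c).intervalIntegrable _ _) hf'',
    intervalIntegral.integral_mul_deriv_eq_deriv_mul hlin hf intervalIntegrable_const hf'_int]
  simp only [sub_self, one_mul]
  ring

noncomputable def midpointKernel (a b x : ℝ) : ℝ := min ((x - a) ^ 2) ((b - x) ^ 2) / 2

theorem midpointKernel_nonneg (a b x : ℝ) : 0 ≤ midpointKernel a b x := by
  unfold midpointKernel; positivity

theorem continuous_midpointKernel (a b : ℝ) : Continuous (midpointKernel a b) := by
  unfold midpointKernel; fun_prop

theorem midpointKernel_reflect (a b x : ℝ) :
    midpointKernel a b (a + b - x) = midpointKernel a b x := by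
  rw [midpointKernel, midpointKernel, min_comm]; ring_nf

theorem integral_midpointKernel_mul_reflect (a b : ℝ) (g : ℝ → ℝ) :
    ∫ x in a..b, midpointKernel a b x * g x =
      ∫ x in a..b, midpointKernel a b x * g (a + b - x) := by
  have := intervalIntegral.integral_comp_sub_left (fun x => midpointKernel a b x * g x) (a + b)
    (a := a) (b := b)
  simp only [add_sub_cancel_right, add_sub_cancel_left, midpointKernel_reflect] at this
  exact this.symm

section

variable {a b : ℝ}

theorem midpointKernel_eq_left {x : ℝ} (hax : a ≤ x) (hxm : x ≤ (a + b) / 2) :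
    midpointKernel a b x = (x - a) ^ 2 / 2 := by
  rw [midpointKernel, min_eq_left (pow_le_pow_left₀ (sub_nonneg.2 hax) (by linarith) 2)]

theorem midpointKernel_eq_right {x : ℝ} (hmx : (a + b) / 2 ≤ x) (hxb : x ≤ b) :
    midpointKernel a b x = (b - x) ^ 2 / 2 := by
  rw [← midpointKernel_reflect, midpointKernel_eq_left (by linarith) (by linarith)]; ring

theorem integral_midpointKernel_mul_of_add_reflect {g : ℝ → ℝ} {c : ℝ} (hg : Continuous g)
    (hsymm : ∀ x, g x + g (a + b - x) = 2 * c) :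
    ∫ x in a..b, midpointKernel a b x * g x = c * ∫ x in a..b, midpointKernel a b x := by
  have hK := continuous_midpointKernel a b
  have hsum : (∫ x in a..b, midpointKernel a b x * g x) +
      ∫ x in a..b, midpointKernel a b x * g (a + b - x) =
      ∫ x in a..b, 2 * c * midpointKernel a b x := by
    rw [← intervalIntegral.integral_add (by apply Continuous.intervalIntegrable; fun_prop)
      (by apply Continuous.intervalIntegrable; fun_prop)]
    congr 1 with x
    linear_combination midpointKernel a b x * hsymm x
  rw [← integral_midpointKernel_mul_reflect, intervalIntegral.integral_const_mul] at hsum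
  linarith

theorem integral_midpointKernel (hab : a ≤ b) :
    ∫ x in a..b, midpointKernel a b x = (b - a) ^ 3 / 24 := by
  have hK := (continuous_midpointKernel a b).intervalIntegrable (μ := volume)
  have hright : ∫ x in (a + b) / 2..b, midpointKernel a b x =
      ∫ x in a..(a + b) / 2, midpointKernel a b x := by
    have := intervalIntegral.integral_comp_sub_left (midpointKernel a b) (a + b)
      (a := a) (b := (a + b) / 2)
    simp only [midpointKernel_reflect] at this
    rw [this]; ring_nf
  have hleft : ∫ x in a..(a + b) / 2, midpointKernel a b x = (b - a) ^ 3 / 48 := by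
    have ham : a ≤ (a + b) / 2 := by linarith
    rw [intervalIntegral.integral_congr (g := fun x => (x - a) ^ 2 / 2) fun x hx => by
      rw [uIcc_of_le ham] at hx; exact midpointKernel_eq_left hx.1 hx.2]
    simp only [intervalIntegral.integral_div, intervalIntegral.integral_comp_sub_right (· ^ 2),
      integral_pow, sub_self]
    ring
  rw [← intervalIntegral.integral_add_adjacent_intervals (hK a ((a + b) / 2)) (hK _ b), hright,
    hleft]
  ring

theorem integral_midpointKernel_mul_second_deriv {f f' f'' : ℝ → ℝ} (hab : a ≤ b)
    (hf : ∀ x ∈ Icc a b, HasDerivAt f (f' x) x)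
    (hf' : ∀ x ∈ Icc a b, HasDerivAt f' (f'' x) x) (hf'' : IntervalIntegrable f'' volume a b) :
    ∫ x in a..b, midpointKernel a b x * f'' x =
      (∫ x in a..b, f x) - (b - a) * f ((a + b) / 2) := by
  set m := (a + b) / 2 with hm
  have ham : a ≤ m := by linarith
  have hmb : m ≤ b := by linarith
  have hab_eq : uIcc a b = Icc a b := uIcc_of_le hab
  have hm_mem : m ∈ uIcc a b := by rw [hab_eq]; exact ⟨ham, hmb⟩
  have hleft_sub : uIcc a m ⊆ uIcc a b := uIcc_subset_uIcc left_mem_uIcc hm_mem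
  have hright_sub : uIcc b m ⊆ uIcc a b := uIcc_subset_uIcc right_mem_uIcc hm_mem
  have hf₁ : ∀ x ∈ uIcc a b, HasDerivAt f (f' x) x := fun x hx => hf x (hab_eq ▸ hx)
  have hf₂ : ∀ x ∈ uIcc a b, HasDerivAt f' (f'' x) x := fun x hx => hf' x (hab_eq ▸ hx)
  have hf_int : IntervalIntegrable f volume a b :=
    ContinuousOn.intervalIntegrable fun x hx => (hf₁ x hx).continuousAt.continuousWithinAt
  have hKf''_int : IntervalIntegrable (fun x => midpointKernel a b x * f'' x) volume a b :=
    hf''.continuousOn_mul (continuous_midpointKernel a b).continuousOn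
  have hleft : ∫ x in a..m, midpointKernel a b x * f'' x =
      ∫ x in a..m, (x - a) ^ 2 / 2 * f'' x := by
    refine intervalIntegral.integral_congr fun x hx => ?_
    rw [uIcc_of_le ham] at hx
    rw [midpointKernel_eq_left hx.1 hx.2]
  have hright : ∫ x in m..b, midpointKernel a b x * f'' x =
      -∫ x in b..m, (x - b) ^ 2 / 2 * f'' x := by
    rw [intervalIntegral.integral_symm]
    congr 1
    refine intervalIntegral.integral_congr fun x hx => ?_
    rw [uIcc_of_ge hmb] at hx
    rw [midpointKernel_eq_right hx.1 hx.2]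
    ring
  have hleft_eq := integral_sq_sub_mul_second_deriv (fun x hx => hf₁ x (hleft_sub hx))
    (fun x hx => hf₂ x (hleft_sub hx)) (hf''.mono_set hleft_sub)
  have hright_eq := integral_sq_sub_mul_second_deriv (fun x hx => hf₁ x (hright_sub hx))
    (fun x hx => hf₂ x (hright_sub hx)) (hf''.mono_set hright_sub)
  rw [uIcc_comm] at hright_sub
  rw [← intervalIntegral.integral_add_adjacent_intervals (hKf''_int.mono_set hleft_sub)
      (hKf''_int.mono_set hright_sub), hleft, hright, hleft_eq, hright_eq,
    ← intervalIntegral.integral_add_adjacent_intervals (hf_int.mono_set hleft_sub)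
      (hf_int.mono_set hright_sub), intervalIntegral.integral_symm m b]
  ring

theorem integral_midpointKernel_mul_le_of_convexOn {φ : ℝ → ℝ} (hab : a < b)
    (hφ : ConvexOn ℝ (Icc a b) φ)
    (hφ_int : IntervalIntegrable (fun x => midpointKernel a b x * φ x) volume a b) :
    ∫ x in a..b, midpointKernel a b x * φ x ≤ (b - a) ^ 3 / 24 * ((φ a + φ b) / 2) := by
  have hba : 0 < b - a := sub_pos.2 hab
  set L : ℝ → ℝ := fun x => ((b - x) * φ a + (x - a) * φ b) / (b - a)
  have hφL : ∀ x ∈ Icc a b, φ x ≤ L x := fun x hx => by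
    rw [le_div_iff₀ hba, mul_comm]; exact hφ.sub_mul_le_secant hx
  have hKL_int : IntervalIntegrable (fun x => midpointKernel a b x * L x) volume a b :=
    (continuous_midpointKernel a b |>.mul (by fun_prop)).intervalIntegrable a b
  calc ∫ x in a..b, midpointKernel a b x * φ x
      ≤ ∫ x in a..b, midpointKernel a b x * L x :=
        intervalIntegral.integral_mono_on hab.le hφ_int hKL_int fun x hx =>
          mul_le_mul_of_nonneg_left (hφL x hx) (midpointKernel_nonneg a b x)
    _ = (b - a) ^ 3 / 24 * ((φ a + φ b) / 2) := by
      rw [integral_midpointKernel_mul_of_add_reflect (c := (φ a + φ b) / 2) (by fun_prop)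
        fun x => by simp only [L]; field_simp; ring, integral_midpointKernel hab.le, mul_comm]

theorem integral_midpointKernel_mul_abs_le {g : ℝ → ℝ} {q : ℝ} (hab : a < b) (hq : 1 ≤ q)
    (hg : IntervalIntegrable g volume a b) (hconv : ConvexOn ℝ (Icc a b) fun x => |g x| ^ q) :
    ∫ x in a..b, midpointKernel a b x * |g x| ≤
      (b - a) ^ 3 / 24 * ((|g a| ^ q + |g b| ^ q) / 2) ^ (1 / q) := by
  set K := midpointKernel a b
  set A := |g a| ^ q
  set B := |g b| ^ q
  have hq0 : 0 < q := one_pos.trans_le hq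
  have hK0 : ∀ x, 0 ≤ K x := midpointKernel_nonneg a b
  have hK : Continuous K := continuous_midpointKernel a b
  have hK_int : ∫ x in a..b, K x = (b - a) ^ 3 / 24 := integral_midpointKernel hab.le
  have hKgq_int : IntervalIntegrable (fun x => K x * |g x| ^ q) volume a b := by
    refine ((hK.mul (continuous_const (y := max A B))).intervalIntegrable a b).mono_fun' ?_ ?_
    · exact hK.aestronglyMeasurable.mul (hg.def'.aemeasurable.abs.pow_const q).aestronglyMeasurable
    · refine (ae_restrict_iff' measurableSet_uIoc).2 (ae_of_all _ fun x hx => ?_)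
      rw [uIoc_of_le hab.le] at hx
      show ‖K x * |g x| ^ q‖ ≤ K x * max A B
      rw [Real.norm_of_nonneg (mul_nonneg (hK0 x) (by positivity))]
      exact mul_le_mul_of_nonneg_left (hconv.le_max_of_mem_Icc (left_mem_Icc.2 hab.le)
        (right_mem_Icc.2 hab.le) (Ioc_subset_Icc_self hx)) (hK0 x)
  have hKgq := integral_midpointKernel_mul_le_of_convexOn hab hconv hKgq_int
  have hsplit : ∀ x, K x * |g x| = K x ^ (1 - 1 / q) * (K x * |g x| ^ q) ^ (1 / q) := fun x => by
    rw [Real.mul_rpow (hK0 x) (by positivity), ← Real.rpow_mul (abs_nonneg _),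
      mul_one_div_cancel hq0.ne', Real.rpow_one, ← mul_assoc,
      ← Real.rpow_add' (hK0 x) (by norm_num), sub_add_cancel, Real.rpow_one]
  have hHolder := integral_rpow_mul_rpow_le_of_add_eq_one (μ := volume.restrict (Ioc a b))
    (ae_of_all _ hK0) (ae_of_all _ fun x => mul_nonneg (hK0 x) (by positivity))
    hK.integrableOn_Ioc hKgq_int.1 (sub_nonneg.2 (div_le_one_of_le₀ hq hq0.le))
    (by positivity) (sub_add_cancel 1 (1 / q))
  simp only [← intervalIntegral.integral_of_le hab.le, hK_int] at hHolder
  calc ∫ x in a..b, K x * |g x|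
      = ∫ x in a..b, K x ^ (1 - 1 / q) * (K x * |g x| ^ q) ^ (1 / q) :=
        intervalIntegral.integral_congr fun x _ => hsplit x
    _ ≤ ((b - a) ^ 3 / 24) ^ (1 - 1 / q) * (∫ x in a..b, K x * |g x| ^ q) ^ (1 / q) := hHolder
    _ ≤ ((b - a) ^ 3 / 24) ^ (1 - 1 / q) * ((b - a) ^ 3 / 24 * ((A + B) / 2)) ^ (1 / q) := by
      gcongr
      exact intervalIntegral.integral_nonneg hab.le fun x _ => mul_nonneg (hK0 x) (by positivity)
    _ = (b - a) ^ 3 / 24 * ((A + B) / 2) ^ (1 / q) := by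
      rw [Real.mul_rpow (by positivity) (by positivity), ← mul_assoc,
        ← Real.rpow_add' (by positivity) (by norm_num), sub_add_cancel, Real.rpow_one]

end

theorem hermite_hadamard_second_deriv_abs_pow_convex_power_mean
    (I : Set ℝ) (hI : I.OrdConnected) (f f' f'' : ℝ → ℝ) (a b : ℝ)
    (ha : a ∈ interior I) (hb : b ∈ interior I) (hab : a < b)
    (hderiv1 : ∀ x ∈ interior I, HasDerivAt f (f' x) x)
    (hderiv2 : ∀ x ∈ interior I, HasDerivAt f' (f'' x) x)
    (hint : IntervalIntegrable f'' volume a b)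
    (q : ℝ) (hq : 1 ≤ q)
    (hconv : ConvexOn ℝ (Set.Icc a b) (fun x => |f'' x| ^ q)) :
    |(1 / (b - a)) * (∫ x in a..b, f x) - f ((a + b) / 2)| ≤
      (b - a) ^ 2 / 24 * ((|f'' a| ^ q + |f'' b| ^ q) / 2) ^ (1 / q) := by
  have hba : 0 < b - a := sub_pos.2 hab
  have hIcc : Icc a b ⊆ interior I := hI.interior.out ha hb
  have hkernel := integral_midpointKernel_mul_second_deriv hab.le (fun x hx => hderiv1 x (hIcc hx))
    (fun x hx => hderiv2 x (hIcc hx)) hint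
  have hmean : (1 / (b - a)) * (∫ x in a..b, f x) - f ((a + b) / 2) =
      (∫ x in a..b, midpointKernel a b x * f'' x) / (b - a) := by
    rw [hkernel]; field_simp
  rw [hmean, abs_div, abs_of_pos hba, div_le_iff₀ hba]
  calc |∫ x in a..b, midpointKernel a b x * f'' x|
      ≤ ∫ x in a..b, midpointKernel a b x * |f'' x| := by
        refine (intervalIntegral.abs_integral_le_integral_abs hab.le).trans_eq ?_
        refine intervalIntegral.integral_congr fun x _ => ?_
        rw [abs_mul, abs_of_nonneg (midpointKernel_nonneg a b x)]
    _ ≤ (b - a) ^ 3 / 24 * ((|f'' a| ^ q + |f'' b| ^ q) / 2) ^ (1 / q) :=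
        integral_midpointKernel_mul_abs_le hab hq hint hconv
    _ = _ := by ring
end

section
/- Let f : I ⊆ ℝ → ℝ be twice differentiable on the interior I° of I, with a, b ∈ I°, a < b, and f'' Lebesgue integrable on [a,b]. If |f''| is quasi-convex on [a,b], then |(1/(b-a)) ∫_a^b f(x) dx − f((a+b)/2)| ≤ ((b-a)²/24) · sup{|f''(a)|, |f''(b)|}. -/
/-! Integrating by parts twice on each half of `[a, b]` gives
`∫ₐᵇ f - (b - a) f(m) = ∫ₐᵇ K f''` with the Peano kernel `K(x) = (x - a)² / 2` on `[a, m]` and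
`(b - x)² / 2` on `[m, b]`, `m = (a + b) / 2`. Quasiconvexity bounds `|f''|` on `[a, b]` by
`max |f'' a| |f'' b|`, and `∫ₐᵇ K = (b - a)³ / 24`. -/

open MeasureTheory intervalIntegral Set

theorem QuasiconvexOn.le_max_of_mem_segment {𝕜 E β : Type*} [Semiring 𝕜] [PartialOrder 𝕜]
    [AddCommMonoid E] [LinearOrder β] [SMul 𝕜 E] {s : Set E} {f : E → β} {x y z : E}
    (hf : QuasiconvexOn 𝕜 s f) (hx : x ∈ s) (hy : y ∈ s) (hz : z ∈ segment 𝕜 x y) :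
    f z ≤ max (f x) (f y) := by
  obtain ⟨t, u, ht, hu, htu, rfl⟩ := hz
  exact (quasiconvexOn_iff_le_max.1 hf).2 hx hy ht hu htu

theorem integral_eq_sub_add_integral_sq_mul_second_deriv {f f' f'' : ℝ → ℝ} {p c : ℝ}
    (hf : ∀ x ∈ uIcc p c, HasDerivAt f (f' x) x) (hf' : ∀ x ∈ uIcc p c, HasDerivAt f' (f'' x) x)
    (hf'' : IntervalIntegrable f'' volume p c) :
    ∫ x in p..c, f x =
      (c - p) * f c - (c - p) ^ 2 / 2 * f' c + ∫ x in p..c, (x - p) ^ 2 / 2 * f'' x := by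
  have hf'_int : IntervalIntegrable f' volume p c :=
    ContinuousOn.intervalIntegrable fun x hx ↦ (hf' x hx).continuousAt.continuousWithinAt
  have ibp₂ := integral_mul_deriv_eq_deriv_mul (u := fun x ↦ (x - p) ^ 2 / 2) (u' := fun x ↦ x - p)
    (fun x _ ↦ by simpa using ((hasDerivAt_id x).sub_const p).pow 2 |>.div_const 2) hf'
    ((continuous_sub_right p).intervalIntegrable _ _) hf''
  have ibp₁ := integral_mul_deriv_eq_deriv_mul (u := fun x ↦ x - p) (u' := fun _ ↦ 1)
    (fun x _ ↦ (hasDerivAt_id x).sub_const p) hf intervalIntegrable_const hf'_int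
  simp only [sub_self, one_mul, zero_mul, sub_zero] at ibp₁ ibp₂
  rw [ibp₂, ibp₁]; ring

theorem abs_integral_sq_mul_le {g : ℝ → ℝ} {p c M : ℝ} (hg : ∀ x ∈ uIcc p c, |g x| ≤ M) :
    |∫ x in p..c, (x - p) ^ 2 / 2 * g x| ≤ M * |c - p| ^ 3 / 6 := by
  have hM : 0 ≤ M := (abs_nonneg _).trans (hg p left_mem_uIcc)
  have hbound :
      ∀ᵐ x ∂volume.restrict (uIoc p c), ‖(x - p) ^ 2 / 2 * g x‖ ≤ (x - p) ^ 2 / 2 * M := by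
    refine (ae_restrict_iff' measurableSet_uIoc).2 (.of_forall fun x hx ↦ ?_)
    rw [Real.norm_eq_abs, abs_mul, abs_of_nonneg (by positivity)]
    exact mul_le_mul_of_nonneg_left (hg x (uIoc_subset_uIcc hx)) (by positivity)
  calc |∫ x in p..c, (x - p) ^ 2 / 2 * g x|
      ≤ |∫ x in p..c, (x - p) ^ 2 / 2 * M| :=
        norm_integral_le_abs_of_norm_le hbound (Continuous.intervalIntegrable (by fun_prop) _ _)
    _ = M * |c - p| ^ 3 / 6 := by
        rw [intervalIntegral.integral_mul_const, intervalIntegral.integral_div,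
          integral_comp_sub_right (· ^ 2), integral_pow, sub_self, zero_pow three_ne_zero,
          sub_zero, abs_mul, abs_div, abs_div, abs_pow, abs_of_nonneg hM]
        norm_num
        ring

theorem add_div_two_mem_uIcc (a b : ℝ) : (a + b) / 2 ∈ uIcc a b :=
  mem_uIcc.2 (by rcases le_total a b with h | h <;> [left; right] <;> constructor <;> linarith)

section Midpoint

variable {f f' f'' : ℝ → ℝ} {a b : ℝ}

theorem integral_sub_mul_midpoint_eq (hf : ∀ x ∈ uIcc a b, HasDerivAt f (f' x) x)
    (hf' : ∀ x ∈ uIcc a b, HasDerivAt f' (f'' x) x) (hf'' : IntervalIntegrable f'' volume a b) :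
    (∫ x in a..b, f x) - (b - a) * f ((a + b) / 2) =
      (∫ x in a..(a + b) / 2, (x - a) ^ 2 / 2 * f'' x) -
        ∫ x in b..(a + b) / 2, (x - b) ^ 2 / 2 * f'' x := by
  -- Expanding from both endpoints towards the midpoint, the `f'` terms cancel: the halves have
  -- equal length.
  have hmid := add_div_two_mem_uIcc a b
  have hleft : uIcc a ((a + b) / 2) ⊆ uIcc a b := uIcc_subset_uIcc left_mem_uIcc hmid
  have hright : uIcc b ((a + b) / 2) ⊆ uIcc a b := uIcc_subset_uIcc right_mem_uIcc hmid
  have hf_cont : ContinuousOn f (uIcc a b) := fun x hx ↦ (hf x hx).continuousAt.continuousWithinAt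
  have hsplit := integral_add_adjacent_intervals
    ((hf_cont.mono hleft).intervalIntegrable (μ := volume))
    ((hf_cont.mono hright).intervalIntegrable (μ := volume)).symm
  rw [integral_symm b] at hsplit
  have h_left := integral_eq_sub_add_integral_sq_mul_second_deriv (fun x hx ↦ hf x (hleft hx))
    (fun x hx ↦ hf' x (hleft hx)) (hf''.mono_set hleft)
  have h_right := integral_eq_sub_add_integral_sq_mul_second_deriv (fun x hx ↦ hf x (hright hx))
    (fun x hx ↦ hf' x (hright hx)) (hf''.symm.mono_set (uIcc_comm a b ▸ hright))
  rw [← hsplit, h_left, h_right]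
  ring

theorem abs_integral_sub_mul_midpoint_le {M : ℝ} (hf : ∀ x ∈ uIcc a b, HasDerivAt f (f' x) x)
    (hf' : ∀ x ∈ uIcc a b, HasDerivAt f' (f'' x) x) (hf'' : IntervalIntegrable f'' volume a b)
    (hM : ∀ x ∈ uIcc a b, |f'' x| ≤ M) :
    |(∫ x in a..b, f x) - (b - a) * f ((a + b) / 2)| ≤ M * |b - a| ^ 3 / 24 := by
  have hmid := add_div_two_mem_uIcc a b
  rw [integral_sub_mul_midpoint_eq hf hf' hf'']
  calc _ ≤ M * |(a + b) / 2 - a| ^ 3 / 6 + M * |(a + b) / 2 - b| ^ 3 / 6 :=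
        (abs_sub _ _).trans <| add_le_add
          (abs_integral_sq_mul_le fun x hx ↦ hM x (uIcc_subset_uIcc left_mem_uIcc hmid hx))
          (abs_integral_sq_mul_le fun x hx ↦ hM x (uIcc_subset_uIcc right_mem_uIcc hmid hx))
    _ = M * |b - a| ^ 3 / 24 := by
        rw [show (a + b) / 2 - a = (b - a) / 2 by ring,
          show (a + b) / 2 - b = -((b - a) / 2) by ring, abs_neg, abs_div, abs_two]
        ring

end Midpoint

theorem hermite_hadamard_second_deriv_abs_quasiconvex
    (I : Set ℝ) (hI : I.OrdConnected) (f f' f'' : ℝ → ℝ) (a b : ℝ)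
    (ha : a ∈ interior I) (hb : b ∈ interior I) (hab : a < b)
    (hderiv1 : ∀ x ∈ interior I, HasDerivAt f (f' x) x)
    (hderiv2 : ∀ x ∈ interior I, HasDerivAt f' (f'' x) x)
    (hint : IntervalIntegrable f'' volume a b)
    (hqc : QuasiconvexOn ℝ (Set.Icc a b) (fun x => |f'' x|)) :
    |(1 / (b - a)) * (∫ x in a..b, f x) - f ((a + b) / 2)| ≤
      (b - a) ^ 2 / 24 * max |f'' a| |f'' b| := by
  have hba : 0 < b - a := sub_pos.2 hab
  have hsub : uIcc a b ⊆ interior I := by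
    rw [uIcc_of_lt hab]; exact hI.interior.out ha hb
  have hM : ∀ x ∈ uIcc a b, |f'' x| ≤ max |f'' a| |f'' b| := fun x hx ↦
    hqc.le_max_of_mem_segment (left_mem_Icc.2 hab.le) (right_mem_Icc.2 hab.le)
      (by rwa [segment_eq_uIcc])
  have key := abs_integral_sub_mul_midpoint_le (fun x hx ↦ hderiv1 x (hsub hx))
    (fun x hx ↦ hderiv2 x (hsub hx)) hint hM
  rw [abs_of_pos hba] at key
  rw [show 1 / (b - a) * (∫ x in a..b, f x) - f ((a + b) / 2) =
      ((∫ x in a..b, f x) - (b - a) * f ((a + b) / 2)) / (b - a) by field_simp,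
    abs_div, abs_of_pos hba, div_le_iff₀ hba]
  exact key.trans_eq (by ring)
end
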